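/- Let (E, ω) be a 2d-dimensional real symplectic vector space and let {(V_j, W_j) : 1 ≤ j ≤ m} be a finite collection of pairs of subspaces with dim V_j + dim W_j = 2d for each j. Then there exists a symplectic automorphism σ, arbitrarily close to the identity, such that σ(V_j) ∩ W_j = {0} for all j = 1, …, m. -/

import Mathlib

open Module Submodule

section SympAux
variable {E : Type*} [AddCommGroup E] [Module ℝ E]

lemma symp_skew (ω : E →ₗ[ℝ] E →ₗ[ℝ] ℝ) (halt : ∀ x, ω x x = 0) (x y : E) :
    ω x y = - ω y x := by
  have h := halt (x + y)
  simp only [map_add, LinearMap.add_apply, halt] at h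
  linarith

/-- Symplectic transvection. -/
noncomputable def sTrans (ω : E →ₗ[ℝ] E →ₗ[ℝ] ℝ) (halt : ∀ x, ω x x = 0) (v : E) :
    E ≃ₗ[ℝ] E where
  toFun z := z + ω z v • v
  map_add' a c := by simp only [map_add, LinearMap.add_apply, add_smul]; abel
  map_smul' r a := by
    simp only [map_smul, LinearMap.smul_apply, smul_eq_mul, RingHom.id_apply, smul_smul,
      mul_comm, smul_add]
  invFun z := z - ω z v • v
  left_inv z := by
    simp only [map_add, map_smul, LinearMap.add_apply, LinearMap.smul_apply, halt,
      smul_eq_mul, mul_zero, add_zero, zero_smul]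
    abel
  right_inv z := by
    simp only [map_sub, map_smul, LinearMap.sub_apply, LinearMap.smul_apply, halt,
      smul_eq_mul, mul_zero, sub_zero, zero_smul]
    abel

variable (ω : E →ₗ[ℝ] E →ₗ[ℝ] ℝ) (halt : ∀ x, ω x x = 0)

lemma sTrans_apply (v z : E) : sTrans ω halt v z = z + ω z v • v := rfl

lemma sTrans_zero : sTrans ω halt (0 : E) = 1 := by
  apply LinearEquiv.toLinearMap_injective
  ext z
  simp [sTrans_apply]

lemma sTrans_omega (v z z' : E) :
    ω (sTrans ω halt v z) (sTrans ω halt v z') = ω z z' := by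
  simp only [sTrans_apply, map_add, map_smul, LinearMap.add_apply, LinearMap.smul_apply,
    smul_eq_mul, halt, mul_zero, add_zero]
  rw [symp_skew ω halt v z']; ring

end SympAux

section SProd
variable {E : Type*} [AddCommGroup E] [Module ℝ E]
variable (ω : E →ₗ[ℝ] E →ₗ[ℝ] ℝ) (halt : ∀ x, ω x x = 0)

noncomputable def sProd (l : List E) : E ≃ₗ[ℝ] E := (l.map (sTrans ω halt)).prod

lemma sProd_nil : sProd ω halt [] = 1 := rfl

lemma sProd_cons (v : E) (l : List E) :
    sProd ω halt (v :: l) = sTrans ω halt v * sProd ω halt l := by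
  simp [sProd]

lemma sProd_append (l l' : List E) :
    sProd ω halt (l ++ l') = sProd ω halt l * sProd ω halt l' := by
  simp [sProd]

lemma sProd_omega (l : List E) (z z' : E) :
    ω (sProd ω halt l z) (sProd ω halt l z') = ω z z' := by
  induction l generalizing z z' with
  | nil => rfl
  | cons v l ih =>
      rw [sProd_cons]
      have : ∀ w, (sTrans ω halt v * sProd ω halt l) w
          = sTrans ω halt v (sProd ω halt l w) := fun _ => rfl
      rw [this, this, sTrans_omega ω halt, ih]

lemma sProd_pad (l : List E) (k : ℕ) :
    sProd ω halt (l ++ List.replicate k 0) = sProd ω halt l := by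
  rw [sProd_append]
  have : sProd ω halt (List.replicate k 0) = 1 := by
    simp [sProd, List.map_replicate, sTrans_zero, List.prod_replicate]
  rw [this, mul_one]

end SProd

section Exist
variable {E : Type*} [AddCommGroup E] [Module ℝ E] [FiniteDimensional ℝ E]
variable (ω : E →ₗ[ℝ] E →ₗ[ℝ] ℝ) (halt : ∀ x, ω x x = 0)

lemma exists_transvections (hnd : ∀ x, (∀ y, ω x y = 0) → x = 0)
    (W : Submodule ℝ E) :
    ∀ (k : ℕ) (V : Submodule ℝ E), finrank ℝ ↥(V ⊓ W) ≤ k →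
      finrank ℝ V + finrank ℝ W = finrank ℝ E →
      ∃ l : List E, l.length ≤ k ∧
        Submodule.map (sProd ω halt l).toLinearMap V ⊓ W = ⊥ := by
  intro k
  induction k with
  | zero =>
      intro V hk _
      refine ⟨[], le_refl _, ?_⟩
      have hbot : V ⊓ W = ⊥ := by
        rw [← Submodule.finrank_eq_zero (R := ℝ) (M := E)]
        omega
      simpa [sProd_nil] using hbot
  | succ k ih =>
      intro V hk hdim
      by_cases hbot : V ⊓ W = ⊥
      · exact ⟨[], by simp, by simpa [sProd_nil] using hbot⟩
      · -- pick x ≠ 0 in V ⊓ W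
        obtain ⟨x, hxVW, hx0⟩ := (Submodule.ne_bot_iff _).mp hbot
        -- V ⊔ W ≠ ⊤
        have hrk : finrank ℝ ↥(V ⊔ W) + finrank ℝ ↥(V ⊓ W) = finrank ℝ V + finrank ℝ W :=
          Submodule.finrank_sup_add_finrank_inf_eq V W
        have hpos : 0 < finrank ℝ ↥(V ⊓ W) :=
          finrank_pos_iff.mpr ⟨⟨x, hxVW⟩, 0, by simp [Subtype.ext_iff, hx0]⟩
        have hsupne : V ⊔ W ≠ ⊤ := by
          intro htop
          rw [htop, finrank_top] at hrk
          omega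
        obtain ⟨v₂, hv₂⟩ : ∃ v₂, v₂ ∉ V ⊔ W := by
          by_contra hcon
          push_neg at hcon
          exact hsupne (Submodule.eq_top_iff'.mpr hcon)
        have hx1 : ¬ ∀ y, ω x y = 0 := fun h => hx0 (hnd x h)
        push_neg at hx1
        obtain ⟨v₁, hv₁⟩ := hx1
        -- choose v with ω x v ≠ 0 and v ∉ V ⊔ W
        obtain ⟨v, hvo, hvs⟩ : ∃ v, ω x v ≠ 0 ∧ v ∉ V ⊔ W := by
          by_cases h1 : v₁ ∈ V ⊔ W
          · by_cases h2 : ω x v₂ = 0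
            · refine ⟨v₁ + v₂, by simp [map_add, h2, hv₁], fun hmem => hv₂ ?_⟩
              have := (V ⊔ W).sub_mem hmem h1
              simpa using this
            · exact ⟨v₂, h2, hv₂⟩
          · exact ⟨v₁, hv₁, h1⟩
        set τ := sTrans ω halt v with hτ
        set V' := Submodule.map τ.toLinearMap V with hV'
        -- the new intersection is strictly smaller
        have hle : V' ⊓ W ≤ (V ⊓ W) ⊓ LinearMap.ker (ω.flip v) := by
          rintro z ⟨⟨u, hu, rfl⟩, hzW⟩
          have ha : ω u v = 0 := by
            by_contra ha
            apply hvs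
            have : v = (ω u v)⁻¹ • (τ u - u) := by
              rw [hτ]
              simp only [sTrans_apply]
              rw [add_sub_cancel_left, smul_smul, inv_mul_cancel₀ ha, one_smul]
            rw [this]
            exact Submodule.smul_mem _ _ (Submodule.sub_mem _
              (Submodule.mem_sup_right hzW)
              (Submodule.mem_sup_left hu))
          have hτu : τ.toLinearMap u = u := by
            rw [hτ]
            show u + ω u v • v = u
            simp [ha]
          constructor
          · exact ⟨by rw [hτu]; exact hu, hzW⟩
          · simp only [SetLike.mem_coe, LinearMap.mem_ker, LinearMap.flip_apply, hτu]
            exact ha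
        have hlt : (V ⊓ W) ⊓ LinearMap.ker (ω.flip v) < V ⊓ W := by
          refine lt_of_le_of_ne inf_le_left (fun heq => ?_)
          have hxK : x ∈ (V ⊓ W) ⊓ LinearMap.ker (ω.flip v) := by
            rw [heq]; exact hxVW
          exact hvo hxK.2
        have hfr : finrank ℝ ↥(V' ⊓ W) ≤ k := by
          have h1 : finrank ℝ ↥(V' ⊓ W) ≤ finrank ℝ ↥((V ⊓ W) ⊓ LinearMap.ker (ω.flip v)) :=
            Submodule.finrank_mono hle
          have h2 : finrank ℝ ↥((V ⊓ W) ⊓ LinearMap.ker (ω.flip v)) < finrank ℝ ↥(V ⊓ W) :=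
            Submodule.finrank_lt_finrank_of_lt hlt
          omega
        have hdim' : finrank ℝ V' + finrank ℝ W = finrank ℝ E := by
          rw [hV', LinearEquiv.finrank_map_eq]; exact hdim
        obtain ⟨l, hlen, hl⟩ := ih V' hfr hdim'
        refine ⟨l ++ [v], by simp; omega, ?_⟩
        rw [sProd_append]
        have hmap : (sProd ω halt l * sProd ω halt [v]).toLinearMap
            = (sProd ω halt l).toLinearMap ∘ₗ τ.toLinearMap := by
          rfl
        rw [hmap, Submodule.map_comp]
        exact hl
  
end Exist

section Poly

variable {E : Type*} [AddCommGroup E] [Module ℝ E] [FiniteDimensional ℝ E]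
variable {n : ℕ} (b : Basis (Fin n) ℝ E)
variable (ω : E →ₗ[ℝ] E →ₗ[ℝ] ℝ) (halt : ∀ x, ω x x = 0)

/-- The vectors encoded by a parameter point. -/
noncomputable def vecOf (c : Fin n × Fin n → ℝ) (i : Fin n) : E :=
  b.equivFun.symm (fun k => c (i, k))

/-- Symbolic matrix of the `i`-th transvection. -/
noncomputable def Tmat (i : Fin n) :
    Matrix (Fin n) (Fin n) (MvPolynomial (Fin n × Fin n) ℝ) :=
  fun p q => (if q = p then 1 else 0)
    + (∑ k, MvPolynomial.C (ω (b q) (b k)) * MvPolynomial.X (i, k)) * MvPolynomial.X (i, p)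

noncomputable def Gmat : Matrix (Fin n) (Fin n) (MvPolynomial (Fin n × Fin n) ℝ) :=
  (List.ofFn (Tmat b ω)).prod

lemma repr_vecOf (c : Fin n × Fin n → ℝ) (i : Fin n) (p : Fin n) :
    b.repr (vecOf b c i) p = c (i, p) := by
  rw [vecOf, ← Basis.equivFun_apply, LinearEquiv.apply_symm_apply]

lemma omega_vecOf (c : Fin n × Fin n → ℝ) (i : Fin n) (z : E) :
    ω z (vecOf b c i) = ∑ k, ω z (b k) * c (i, k) := by
  rw [vecOf, Basis.equivFun_symm_apply]
  rw [map_sum]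
  congr 1
  ext k
  rw [map_smul]
  simp [mul_comm]

lemma eval_Tmat (c : Fin n × Fin n → ℝ) (i : Fin n) :
    (MvPolynomial.eval c).mapMatrix (Tmat b ω i)
      = LinearMap.toMatrix b b (sTrans ω halt (vecOf b c i)).toLinearMap := by
  ext p q
  rw [RingHom.mapMatrix_apply, Matrix.map_apply, LinearMap.toMatrix_apply]
  have happ : (sTrans ω halt (vecOf b c i)).toLinearMap (b q)
      = b q + ω (b q) (vecOf b c i) • vecOf b c i := rfl
  rw [happ, map_add, map_smul, Finsupp.add_apply, Finsupp.smul_apply,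
    Basis.repr_self_apply, repr_vecOf, omega_vecOf]
  rw [Tmat]
  simp only [map_add, map_mul, map_sum, MvPolynomial.eval_C, MvPolynomial.eval_X,
    smul_eq_mul]
  congr 1
  · split <;> simp
end Poly

section Poly2
set_option linter.unusedSectionVars false
variable {E : Type*} [AddCommGroup E] [Module ℝ E] [FiniteDimensional ℝ E]
variable {n : ℕ} (b : Basis (Fin n) ℝ E)
variable (ω : E →ₗ[ℝ] E →ₗ[ℝ] ℝ) (halt : ∀ x, ω x x = 0)

lemma toMatrix_sProd (l : List E) :
    LinearMap.toMatrix b b (sProd ω halt l).toLinearMap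
      = (l.map (fun v => LinearMap.toMatrix b b (sTrans ω halt v).toLinearMap)).prod := by
  induction l with
  | nil => simpa [sProd_nil] using LinearMap.toMatrix_id b
  | cons v l ih =>
      rw [sProd_cons, List.map_cons, List.prod_cons, ← ih]
      have : (sTrans ω halt v * sProd ω halt l).toLinearMap
          = (sTrans ω halt v).toLinearMap * (sProd ω halt l).toLinearMap := rfl
      rw [this, LinearMap.toMatrix_mul]

lemma eval_Gmat (c : Fin n × Fin n → ℝ) :
    (MvPolynomial.eval c).mapMatrix (Gmat b ω)
      = LinearMap.toMatrix b b (sProd ω halt (List.ofFn (vecOf b c))).toLinearMap := by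
  rw [Gmat, map_list_prod, toMatrix_sProd b ω halt, List.map_ofFn, List.map_ofFn]
  have hfg : (⇑(MvPolynomial.eval c).mapMatrix ∘ Tmat b ω)
      = ((fun v => (LinearMap.toMatrix b b) ((sTrans ω halt v) : E →ₗ[ℝ] E)) ∘ vecOf b c) := by
    funext i
    exact eval_Tmat b ω halt c i
  rw [hfg]

end Poly2

section Det
set_option linter.unusedSectionVars false
variable {E : Type*} [AddCommGroup E] [Module ℝ E] [FiniteDimensional ℝ E]
variable {n : ℕ} (b : Basis (Fin n) ℝ E)

lemma transversal_iff_det (Φ : E ≃ₗ[ℝ] E) (V W : Submodule ℝ E)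
    (hd : finrank ℝ V + finrank ℝ W = finrank ℝ E)
    {a c : ℕ} (bV : Basis (Fin a) ℝ V) (bW : Basis (Fin c) ℝ W)
    (e : (Fin a ⊕ Fin c) ≃ Fin n) :
    (Submodule.map Φ.toLinearMap V ⊓ W = ⊥) ↔
      b.det (fun col => Sum.elim (fun s => Φ ((bV s : E))) (fun s => ((bW s : E)))
        (e.symm col)) ≠ 0 := by
  set f : Fin a → E := fun s => Φ ((bV s : E)) with hf
  set g : Fin c → E := fun s => ((bW s : E)) with hg
  set u : Fin n → E := fun col => Sum.elim f g (e.symm col) with hu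
  -- spans
  have hspanV : Submodule.span ℝ (Set.range fun s => ((bV s : E))) = V := by
    have h1 : (fun s => ((bV s : E))) = (V.subtype ∘ bV) := rfl
    rw [h1, Set.range_comp, Submodule.span_image, bV.span_eq, Submodule.map_subtype_top]
  have hspanW : Submodule.span ℝ (Set.range g) = W := by
    have h1 : g = (W.subtype ∘ bW) := rfl
    rw [h1, Set.range_comp, Submodule.span_image, bW.span_eq, Submodule.map_subtype_top]
  have hspanf : Submodule.span ℝ (Set.range f) = Submodule.map Φ.toLinearMap V := by
    rw [hf]
    have : (fun s => Φ ((bV s : E))) = Φ.toLinearMap ∘ (fun s => ((bV s : E))) := rfl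
    rw [this, Set.range_comp, Submodule.span_image, hspanV]
  -- linear independence of the two halves
  have hliV : LinearIndependent ℝ (fun s => ((bV s : E))) :=
    bV.linearIndependent.map' V.subtype (Submodule.ker_subtype V)
  have hlif : LinearIndependent ℝ f :=
    hliV.map' Φ.toLinearMap Φ.ker
  have hlig : LinearIndependent ℝ g :=
    bW.linearIndependent.map' W.subtype (Submodule.ker_subtype W)
  -- equivalences
  have hrange : Set.range u = Set.range (Sum.elim f g) := by
    rw [hu]
    exact Function.Surjective.range_comp e.symm.surjective _
  have hliu : LinearIndependent ℝ u ↔ LinearIndependent ℝ (Sum.elim f g) :=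
    linearIndependent_equiv e.symm
  have hfinV : finrank ℝ ↥(Submodule.map Φ.toLinearMap V) = finrank ℝ V :=
    LinearEquiv.finrank_map_eq Φ V
  constructor
  · intro hbot
    -- show u is a basis
    have hdisj : Disjoint (Submodule.span ℝ (Set.range f)) (Submodule.span ℝ (Set.range g)) := by
      rw [hspanf, hspanW, disjoint_iff]
      exact hbot
    have hli : LinearIndependent ℝ u :=
      hliu.mpr (linearIndependent_sum.mpr ⟨hlif, hlig, hdisj⟩)
    have hspan : Submodule.span ℝ (Set.range u) = ⊤ := by
      rw [hrange, Set.Sum.elim_range, Submodule.span_union, hspanf, hspanW]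
      apply Submodule.eq_top_of_finrank_eq
      have := Submodule.finrank_sup_add_finrank_inf_eq (Submodule.map Φ.toLinearMap V) W
      rw [hbot] at this
      simp only [finrank_bot, add_zero] at this
      omega
    have := (Module.Basis.is_basis_iff_det b).mp ⟨hli, hspan⟩
    exact IsUnit.ne_zero (by simpa using this)
  · intro hdet
    have : LinearIndependent ℝ u ∧ Submodule.span ℝ (Set.range u) = ⊤ :=
      (Module.Basis.is_basis_iff_det b).mpr (isUnit_iff_ne_zero.mpr hdet)
    have hli := hliu.mp this.1
    obtain ⟨-, -, hdisj⟩ := linearIndependent_sum.mp hli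
    rw [Sum.elim_comp_inl, Sum.elim_comp_inr, hspanf, hspanW, disjoint_iff] at hdisj
    exact hdisj
end Det

lemma ofFn_getD {E : Type*} (l : List E) (z : E) (n : ℕ) (h : l.length = n) :
    List.ofFn (fun i : Fin n => l.getD i z) = l := by
  subst h
  have : (fun i : Fin l.length => l.getD i z) = fun i : Fin l.length => l.get i := by
    funext i
    exact List.getD_eq_getElem l z i.isLt
  rw [this, List.ofFn_get]

section Repl
variable {E : Type*} [AddCommGroup E] [Module ℝ E]
variable (ω : E →ₗ[ℝ] E →ₗ[ℝ] ℝ) (halt : ∀ x, ω x x = 0)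

lemma sProd_replicate_zero (k : ℕ) : sProd ω halt (List.replicate k 0) = 1 := by
  simp [sProd, List.map_replicate, sTrans_zero, List.prod_replicate]

end Repl


/-- Given finitely many pairs (V_j, W_j) of subspaces of complementary dimensions in a
2d-dimensional symplectic space, there is a symplectic automorphism σ, arbitrarily close
to the identity, with σ(V_j) ∩ W_j = {0} for all j. -/
theorem symplectic_automorphism_makes_transverse (d m : ℕ)
    {E : Type*} [NormedAddCommGroup E] [NormedSpace ℝ E] [FiniteDimensional ℝ E]
    (hdim : Module.finrank ℝ E = 2*d)
    (ω : E →ₗ[ℝ] E →ₗ[ℝ] ℝ)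
    (halt : ∀ x, ω x x = 0)
    (hnd : ∀ x, (∀ y, ω x y = 0) → x = 0)
    (V W : Fin m → Submodule ℝ E)
    (hVW : ∀ j, Module.finrank ℝ (V j) + Module.finrank ℝ (W j) = 2*d) :
    ∀ ε > 0, ∃ σ : E ≃L[ℝ] E,
      (∀ u u', ω (σ u) (σ u') = ω u u') ∧
      ‖(σ : E →L[ℝ] E) - ContinuousLinearMap.id ℝ E‖ < ε ∧
      ∀ j, Submodule.map (σ : E →ₗ[ℝ] E) (V j) ⊓ W j = ⊥ := by
  classical
  intro ε hε
  set n := 2*d with hn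
  let b : Basis (Fin n) ℝ E := Module.finBasisOfFinrankEq ℝ E hdim
  let bV : ∀ j, Basis (Fin (Module.finrank ℝ (V j))) ℝ (V j) := fun j => Module.finBasis ℝ (V j)
  let bW : ∀ j, Basis (Fin (Module.finrank ℝ (W j))) ℝ (W j) := fun j => Module.finBasis ℝ (W j)
  let e : ∀ j, (Fin (Module.finrank ℝ (V j)) ⊕ Fin (Module.finrank ℝ (W j))) ≃ Fin n :=
    fun j => finSumFinEquiv.trans (finCongr (hVW j))
  let Φ : (Fin n × Fin n → ℝ) → E ≃ₗ[ℝ] E := fun c => sProd ω halt (List.ofFn (vecOf b c))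
  let u : ∀ j, (Fin n × Fin n → ℝ) → Fin n → E := fun j c col =>
    Sum.elim (fun s => Φ c ((bV j s : E))) (fun s => ((bW j s : E))) ((e j).symm col)
  let P : Fin m → MvPolynomial (Fin n × Fin n) ℝ := fun j =>
    Matrix.det (Matrix.of fun p col =>
      Sum.elim (fun s => ∑ q, Gmat b ω p q * MvPolynomial.C (b.repr ((bV j s : E)) q))
        (fun s => MvPolynomial.C (b.repr ((bW j s : E)) p)) ((e j).symm col))
  have hbridge : ∀ j c, MvPolynomial.eval c (P j) = b.det (u j c) := by
    intro j c
    have hGm := eval_Gmat b ω halt c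
    have hG : ∀ p q', MvPolynomial.eval c (Gmat b ω p q')
        = LinearMap.toMatrix b b (Φ c).toLinearMap p q' := by
      intro p q'
      have h1 : MvPolynomial.eval c (Gmat b ω p q')
          = ((MvPolynomial.eval c).mapMatrix (Gmat b ω)) p q' := rfl
      rw [h1, hGm]
    show MvPolynomial.eval c (Matrix.det (Matrix.of fun p col =>
        Sum.elim (fun s => ∑ q, Gmat b ω p q * MvPolynomial.C (b.repr ((bV j s : E)) q))
          (fun s => MvPolynomial.C (b.repr ((bW j s : E)) p)) ((e j).symm col)))
      = b.det (u j c)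
    rw [Basis.det_apply, RingHom.map_det]
    congr 1
    ext p col
    rw [RingHom.mapMatrix_apply, Matrix.map_apply, Matrix.of_apply, Basis.toMatrix_apply]
    show _ = b.repr (Sum.elim (fun s => Φ c ((bV j s : E)))
        (fun s => ((bW j s : E))) ((e j).symm col)) p
    rcases h : (e j).symm col with s | s
    · simp only [Sum.elim_inl, map_sum]
      show _ = (b.repr ((Φ c).toLinearMap ((bV j s : E)))) p
      rw [← LinearMap.toMatrix_mulVec_repr b b (Φ c).toLinearMap ((bV j s : E))]
      simp only [Matrix.mulVec, dotProduct]
      refine Finset.sum_congr rfl fun q' _ => ?_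
      rw [map_mul, MvPolynomial.eval_C, hG p q']
    · simp only [Sum.elim_inr, MvPolynomial.eval_C]
  have hfr : ∀ j, Module.finrank ℝ (V j) + Module.finrank ℝ (W j) = Module.finrank ℝ E := by
    intro j; rw [hdim]; exact hVW j
  have htrans : ∀ j c, MvPolynomial.eval c (P j) ≠ 0 ↔
      Submodule.map (Φ c).toLinearMap (V j) ⊓ W j = ⊥ := by
    intro j c
    rw [hbridge j c]
    exact (transversal_iff_det b (Φ c) (V j) (W j) (hfr j) (bV j) (bW j) (e j)).symm
  have hPne : ∀ j, P j ≠ 0 := by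
    intro j hP0
    have hsub : Module.finrank ℝ ↥(V j ⊓ W j) ≤ n := by
      have h1 := Submodule.finrank_le (R := ℝ) (M := E) (V j ⊓ W j)
      omega
    obtain ⟨l, hlen, hl⟩ := exists_transvections ω halt hnd (W j) n (V j) hsub (hfr j)
    set l' := l ++ List.replicate (n - l.length) 0 with hl'def
    have hlen' : l'.length = n := by
      rw [hl'def]; simp; omega
    set cj : Fin n × Fin n → ℝ := fun ik => b.equivFun (l'.getD ik.1 0) ik.2 with hcjdef
    have hvec : vecOf b cj = fun i : Fin n => l'.getD i 0 := by
      funext i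
      show b.equivFun.symm (fun k => b.equivFun (l'.getD i 0) k) = _
      exact b.equivFun.symm_apply_apply _
    have hΦ : Φ cj = sProd ω halt l := by
      show sProd ω halt (List.ofFn (vecOf b cj)) = _
      rw [hvec, ofFn_getD l' 0 n hlen', hl'def, sProd_pad]
    have hev := (htrans j cj).mpr (by rw [hΦ]; exact hl)
    rw [hP0] at hev
    simp at hev
  have hprodne : (∏ j, P j) ≠ 0 := Finset.prod_ne_zero_iff.mpr fun j _ => hPne j
  obtain ⟨c₀, hc₀⟩ : ∃ c₀, MvPolynomial.eval c₀ (∏ j, P j) ≠ 0 := by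
    by_contra h
    push_neg at h
    exact hprodne (MvPolynomial.funext fun x => by simp [h x])
  -- restriction to the line through c₀
  have hline : ∀ (p : MvPolynomial (Fin n × Fin n) ℝ) (s : ℝ),
      Polynomial.eval s (MvPolynomial.aeval
        (fun i => Polynomial.C (c₀ i) * Polynomial.X) p)
        = MvPolynomial.eval (fun i => c₀ i * s) p := by
    intro p s
    have hcomp : (Polynomial.evalRingHom s).comp
        ((MvPolynomial.aeval (fun i : Fin n × Fin n =>
          Polynomial.C (c₀ i) * Polynomial.X)).toRingHom)
        = (MvPolynomial.eval (fun i => c₀ i * s)) := by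
      apply MvPolynomial.ringHom_ext
      · intro r; simp
      · intro i; simp
    exact RingHom.congr_fun hcomp p
  set q : Polynomial ℝ :=
    MvPolynomial.aeval (fun i : Fin n × Fin n => Polynomial.C (c₀ i) * Polynomial.X)
      (∏ j, P j) with hqdef
  have hq1 : q.eval 1 ≠ 0 := by
    rw [hqdef, hline]
    have : (fun i : Fin n × Fin n => c₀ i * 1) = c₀ := by funext i; ring
    rw [this]; exact hc₀
  have hqne : q ≠ 0 := fun h => hq1 (by simp [h])
  have hroots : {s : ℝ | q.IsRoot s}.Finite := Polynomial.finite_setOf_isRoot hqne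
  -- continuity of the parametrized family
  let L : Matrix (Fin n) (Fin n) ℝ →ₗ[ℝ] (E →L[ℝ] E) :=
    { toFun := fun A => LinearMap.toContinuousLinearMap (Matrix.toLin b b A)
      map_add' := by intro A B; ext x; simp [map_add]
      map_smul' := by intro r A; ext x; simp }
  have hLcont : Continuous L := LinearMap.continuous_of_finiteDimensional L
  let Mt : ℝ → Matrix (Fin n) (Fin n) ℝ := fun s =>
    (MvPolynomial.eval (fun i => c₀ i * s)).mapMatrix (Gmat b ω)
  have hMt : Continuous Mt := by
    apply continuous_matrix
    intro p q'
    have heq : (fun s => Mt s p q') = fun s =>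
        Polynomial.eval s (MvPolynomial.aeval
          (fun i : Fin n × Fin n => Polynomial.C (c₀ i) * Polynomial.X) (Gmat b ω p q')) := by
      funext s
      exact (hline _ s).symm
    rw [heq]
    exact Polynomial.continuous _
  let g : ℝ → (E →L[ℝ] E) := fun s => L (Mt s)
  have hgcont : Continuous g := hLcont.comp hMt
  have hgeq : ∀ s, g s =
      LinearMap.toContinuousLinearMap (Φ (fun i => c₀ i * s)).toLinearMap := by
    intro s
    show L (Mt s) = _
    have : Mt s = LinearMap.toMatrix b b (Φ (fun i => c₀ i * s)).toLinearMap :=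
      eval_Gmat b ω halt _
    rw [this]
    show LinearMap.toContinuousLinearMap (Matrix.toLin b b _) = _
    rw [Matrix.toLin_toMatrix]
  have hg0 : g 0 = ContinuousLinearMap.id ℝ E := by
    rw [hgeq 0]
    have hc0 : Φ (fun i => c₀ i * 0) = 1 := by
      have h1 : (fun i : Fin n × Fin n => c₀ i * 0) = fun _ => (0:ℝ) := by
        funext i; ring
      show sProd ω halt (List.ofFn (vecOf b fun i => c₀ i * 0)) = 1
      rw [h1]
      have h2 : vecOf b (fun _ => (0:ℝ)) = fun _ : Fin n => (0:E) := by
        funext i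
        show b.equivFun.symm (fun _ => (0:ℝ)) = 0
        have : (fun _ : Fin n => (0:ℝ)) = 0 := rfl
        rw [this, map_zero]
      rw [h2, List.ofFn_const, sProd_replicate_zero]
    rw [hc0]
    ext x
    rfl
  -- choose a small parameter value avoiding the roots
  have hcont0 : ContinuousAt g 0 := hgcont.continuousAt
  rw [Metric.continuousAt_iff] at hcont0
  obtain ⟨δ, hδpos, hδ⟩ := hcont0 ε hε
  obtain ⟨s, hsI, hsroot⟩ :=
    (Set.Ioo_infinite hδpos).exists_notMem_finite hroots
  set c : Fin n × Fin n → ℝ := fun i => c₀ i * s with hcdef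
  have hPc : ∀ j, MvPolynomial.eval c (P j) ≠ 0 := by
    intro j hzero
    apply hsroot
    show q.IsRoot s
    rw [Polynomial.IsRoot, hqdef, hline, map_prod]
    exact Finset.prod_eq_zero (Finset.mem_univ j) hzero
  refine ⟨(Φ c).toContinuousLinearEquiv, ?_, ?_, ?_⟩
  · intro x y
    have hap : ∀ z, (Φ c).toContinuousLinearEquiv z = Φ c z := fun z => rfl
    rw [hap, hap]
    exact sProd_omega ω halt _ x y
  · have hcoe : ((Φ c).toContinuousLinearEquiv : E →L[ℝ] E) = g s := by
      rw [hgeq s]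
      ext x
      rfl
    rw [hcoe, ← hg0]
    have : dist s 0 < δ := by
      rw [Real.dist_eq, sub_zero, abs_of_pos hsI.1]
      exact hsI.2
    have hd := hδ this
    rwa [dist_eq_norm] at hd
  · intro j
    have hcoe : (((Φ c).toContinuousLinearEquiv : E ≃L[ℝ] E) : E →ₗ[ℝ] E)
        = (Φ c).toLinearMap := by
      ext x; rfl
    rw [hcoe]
    exact (htrans j c).mp (hPc j)
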